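/- Let G = (V,E) be a finite simple graph with a 1-critical bifiltration given by crit : E → ℝ², and let e = {a,b} be an edge of G. Define C := {crit(e)} ∪ { crit_e(w₁) ∗ crit_e(w₂) : w₁, w₂ ∈ N_G(e) } (where w₁ = w₂ is allowed). Then e is dominated in G_c for every grade c ∈ C if and only if e is filtration-dominated in G. -/

import Mathlib

/-- The subgraph of `G` at grade `c` in a 1-critical bifiltration: it keeps
exactly the edges whose critical grade is `≤ c` (componentwise order on `ℝ²`). -/
def gradedSubgraph {V : Type*} (G : SimpleGraph V) (crit : Sym2 V → ℝ × ℝ)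
    (c : ℝ × ℝ) : SimpleGraph V where
  Adj u v := G.Adj u v ∧ crit s(u, v) ≤ c
  symm := by
    constructor
    intro u v h
    refine ⟨h.1.symm, ?_⟩
    rw [Sym2.eq_swap]
    exact h.2
  loopless := ⟨fun u h => G.irrefl h.1⟩

/-- `w` is an edge neighbor of the edge `{a,b}` in `H`: it is adjacent to both endpoints. -/
def edgeNbr {V : Type*} (H : SimpleGraph V) (a b w : V) : Prop :=
  H.Adj a w ∧ H.Adj b w

/-- The edge `{a,b}` is dominated by `v` in `H`. -/
def dominatedBy {V : Type*} (H : SimpleGraph V) (a b v : V) : Prop :=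
  edgeNbr H a b v ∧ ∀ w, edgeNbr H a b w → w ≠ v → H.Adj v w

/-- The edge `{a,b}` is dominated in `H` (by some vertex). -/
def dominated {V : Type*} (H : SimpleGraph V) (a b : V) : Prop :=
  ∃ v, dominatedBy H a b v

/-- `crit_e(w) = crit(e) ∗ crit({a,w}) ∗ crit({b,w})`, the grade at which `w`
becomes an edge neighbor of `e = {a,b}`. -/
def critE {V : Type*} (crit : Sym2 V → ℝ × ℝ) (a b w : V) : ℝ × ℝ :=
  crit s(a, b) ⊔ crit s(a, w) ⊔ crit s(b, w)

/-- The set `C = {crit(e)} ∪ {crit_e(w₁) ∗ crit_e(w₂) : w₁, w₂ ∈ N_G(e)}`. -/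
def critJoins {V : Type*} (G : SimpleGraph V) (crit : Sym2 V → ℝ × ℝ)
    (a b : V) : Set (ℝ × ℝ) :=
  {crit s(a, b)} ∪
    {x | ∃ w₁ w₂, edgeNbr G a b w₁ ∧ edgeNbr G a b w₂ ∧
      x = critE crit a b w₁ ⊔ critE crit a b w₂}

/-- `Δ(p,q) = {r : p ≤ r ∧ ¬ q ≤ r}`. -/
def Delta (p q : ℝ × ℝ) : Set (ℝ × ℝ) := {r | p ≤ r ∧ ¬ q ≤ r}

/-!
Domination of `e` at a grade `c` only depends on the edges of `G_c` among `e`'s edge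
neighbors, and shrinking `c` can only delete edges. Given `c ≥ crit(e)`, pick edge neighbors
`w₁`, `w₂` of `e` in `G_c` maximizing the first and the second coordinate of `crit_e`; the
grade `c' = crit_e(w₁) ∗ crit_e(w₂) ∈ C` satisfies `c' ≤ c` and `G_{c'}` already has all
edge neighbors of `e` in `G_c`. A vertex dominating `e` in `G_{c'}` therefore dominates it in
`G_c` too.
-/

theorem Finset.exists_le_sup_sup_of_prod {ι α β : Type*} [LinearOrder α] [LinearOrder β]
    {s : Finset ι} (hs : s.Nonempty) (f : ι → α × β) :
    ∃ i ∈ s, ∃ j ∈ s, ∀ k ∈ s, f k ≤ f i ⊔ f j := by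
  obtain ⟨i, hi, hi_max⟩ := s.exists_max_image (fun k => (f k).1) hs
  obtain ⟨j, hj, hj_max⟩ := s.exists_max_image (fun k => (f k).2) hs
  exact ⟨i, hi, j, hj, fun k hk => ⟨le_sup_of_le_left (hi_max k hk),
    le_sup_of_le_right (hj_max k hk)⟩⟩

section

variable {V : Type*}

theorem edgeNbr.mono {H K : SimpleGraph V} (hHK : H ≤ K) {a b w : V}
    (hw : edgeNbr H a b w) : edgeNbr K a b w :=
  ⟨hHK hw.1, hHK hw.2⟩

theorem dominatedBy.mono {H K : SimpleGraph V} (hHK : H ≤ K) {a b v : V}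
    (hN : ∀ w, edgeNbr K a b w → edgeNbr H a b w) (hv : dominatedBy H a b v) :
    dominatedBy K a b v :=
  ⟨hv.1.mono hHK, fun w hw hwv => hHK (hv.2 w (hN w hw) hwv)⟩

variable (G : SimpleGraph V) (crit : Sym2 V → ℝ × ℝ) {a b w : V}

theorem gradedSubgraph_le {c : ℝ × ℝ} : gradedSubgraph G crit c ≤ G :=
  fun _ _ h => h.1

theorem gradedSubgraph_mono {c d : ℝ × ℝ} (hcd : c ≤ d) :
    gradedSubgraph G crit c ≤ gradedSubgraph G crit d :=
  fun _ _ h => ⟨h.1, h.2.trans hcd⟩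

theorem edgeNbr_gradedSubgraph_of_critE_le {c : ℝ × ℝ} (hw : edgeNbr G a b w)
    (hwc : critE crit a b w ≤ c) : edgeNbr (gradedSubgraph G crit c) a b w :=
  ⟨⟨hw.1, le_sup_right.trans (le_sup_left.trans hwc)⟩, ⟨hw.2, le_sup_right.trans hwc⟩⟩

theorem critE_le_of_edgeNbr_gradedSubgraph {c : ℝ × ℝ} (hc : crit s(a, b) ≤ c)
    (hw : edgeNbr (gradedSubgraph G crit c) a b w) : critE crit a b w ≤ c :=
  sup_le (sup_le hc hw.1.2) hw.2.2

theorem crit_le_of_mem_critJoins {c : ℝ × ℝ} (hc : c ∈ critJoins G crit a b) :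
    crit s(a, b) ≤ c := by
  rcases hc with rfl | ⟨w₁, w₂, -, -, rfl⟩
  · exact le_rfl
  · exact le_sup_left.trans (le_sup_left.trans le_sup_left)

theorem exists_mem_critJoins_le_of_edgeNbr [Fintype V] {c : ℝ × ℝ} (hc : crit s(a, b) ≤ c)
    (hw : edgeNbr (gradedSubgraph G crit c) a b w) :
    ∃ c' ∈ critJoins G crit a b, c' ≤ c ∧
      ∀ u, edgeNbr (gradedSubgraph G crit c) a b u →
        edgeNbr (gradedSubgraph G crit c') a b u := by
  classical
  let N := Finset.univ.filter (edgeNbr (gradedSubgraph G crit c) a b)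
  have hN : ∀ u, u ∈ N ↔ edgeNbr (gradedSubgraph G crit c) a b u := by simp [N]
  obtain ⟨w₁, hw₁, w₂, hw₂, hmax⟩ :=
    Finset.exists_le_sup_sup_of_prod ⟨w, (hN w).2 hw⟩ (critE crit a b)
  rw [hN] at hw₁ hw₂
  refine ⟨_, Or.inr ⟨w₁, w₂, hw₁.mono (gradedSubgraph_le G crit),
    hw₂.mono (gradedSubgraph_le G crit), rfl⟩, ?_, fun u hu => ?_⟩
  · exact sup_le (critE_le_of_edgeNbr_gradedSubgraph G crit hc hw₁)
      (critE_le_of_edgeNbr_gradedSubgraph G crit hc hw₂)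
  · exact edgeNbr_gradedSubgraph_of_critE_le G crit (hu.mono (gradedSubgraph_le G crit))
      (hmax u ((hN u).2 hu))

end

theorem dominated_on_critJoins_iff_filtrationDominated_general
    {V : Type*} [Fintype V] (G : SimpleGraph V) (crit : Sym2 V → ℝ × ℝ)
    (a b : V) :
    (∀ c ∈ critJoins G crit a b, dominated (gradedSubgraph G crit c) a b) ↔
      (∀ c : ℝ × ℝ, crit s(a, b) ≤ c → dominated (gradedSubgraph G crit c) a b) := by
  refine ⟨fun h c hc => ?_, fun h c hc => h c (crit_le_of_mem_critJoins G crit hc)⟩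
  obtain ⟨v₀, hv₀, -⟩ := h _ (Set.mem_union_left _ rfl)
  obtain ⟨c', hc', hc'c, hN⟩ := exists_mem_critJoins_le_of_edgeNbr G crit hc
    (hv₀.mono (gradedSubgraph_mono G crit hc))
  obtain ⟨v, hv⟩ := h c' hc'
  exact ⟨v, hv.mono (gradedSubgraph_mono G crit hc'c) hN⟩

/-- Lemma: joins of critical grades suffice.
`e = {a,b}` is dominated at every grade in `C` iff it is filtration-dominated. -/
theorem dominated_on_critJoins_iff_filtrationDominated
    {V : Type*} [Fintype V] (G : SimpleGraph V) (crit : Sym2 V → ℝ × ℝ)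
    (a b : V) (hab : G.Adj a b) :
    (∀ c ∈ critJoins G crit a b, dominated (gradedSubgraph G crit c) a b) ↔
      (∀ c : ℝ × ℝ, crit s(a, b) ≤ c → dominated (gradedSubgraph G crit c) a b) :=
  dominated_on_critJoins_iff_filtrationDominated_general G crit a b
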